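/- arXiv:1109.1427 — 2 statements merged into one kernel-verified Lean document; each statement's English description precedes it below -/
import Mathlib

section
/- Let (hⁱ) be harmonic polynomials converging uniformly on compact sets to a nonconstant harmonic polynomial h, and let B be a closed ball with Σ_h ∩ int B ≠ ∅. If Σ_{hⁱ} ∩ B converges in the Hausdorff distance to a closed set F ⊂ B, then F ⊂ Σ_h ∩ B and F ∩ int B = Σ_h ∩ int B. -/
open MvPolynomial Metric Filter
open scoped ENNReal

/-- Evaluate a multivariate polynomial at a point of Euclidean space. -/
noncomputable def evalPt {n : ℕ} (p : MvPolynomial (Fin n) ℝ)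
    (y : EuclideanSpace ℝ (Fin n)) : ℝ :=
  MvPolynomial.eval (fun i => y i) p

/-- The zero set of a polynomial. -/
def zeroSet {n : ℕ} (p : MvPolynomial (Fin n) ℝ) : Set (EuclideanSpace ℝ (Fin n)) :=
  {y | evalPt p y = 0}

/-- The polynomial y ↦ p(y + x). -/
noncomputable def translatePoly {n : ℕ} (p : MvPolynomial (Fin n) ℝ)
    (x : EuclideanSpace ℝ (Fin n)) : MvPolynomial (Fin n) ℝ :=
  MvPolynomial.bind₁ (fun i => MvPolynomial.X i + MvPolynomial.C (x i)) p

/-- The homogeneous part of degree `k` of `p` centered at `x`. -/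
noncomputable def homPart {n : ℕ} (p : MvPolynomial (Fin n) ℝ)
    (x : EuclideanSpace ℝ (Fin n)) (k : ℕ) : MvPolynomial (Fin n) ℝ :=
  MvPolynomial.homogeneousComponent k (translatePoly p x)

/-- The sup norm of |q| on the closed ball B(0,r), as an extended nonnegative real. -/
noncomputable def supNormBall {n : ℕ} (q : MvPolynomial (Fin n) ℝ) (r : ℝ) : ℝ≥0∞ :=
  ⨆ y ∈ Metric.closedBall (0 : EuclideanSpace ℝ (Fin n)) r, ENNReal.ofReal |evalPt q y|

/-- ζ_k(p,x,r): the relative size of the homogeneous part of degree k of a polynomial of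
degree d, centered at x, on the ball of radius r. -/
noncomputable def zeta {n : ℕ} (d : ℕ) (p : MvPolynomial (Fin n) ℝ)
    (x : EuclideanSpace ℝ (Fin n)) (k : ℕ) (r : ℝ) : ℝ≥0∞ :=
  ⨆ j ∈ (Finset.range (d + 1)).erase k,
    supNormBall (homPart p x j) r / supNormBall (homPart p x k) r

/-- A polynomial is harmonic if its Laplacian vanishes. -/
def IsHarmonic {n : ℕ} (p : MvPolynomial (Fin n) ℝ) : Prop :=
  ∑ i : Fin n, MvPolynomial.pderiv i (MvPolynomial.pderiv i p) = 0

/-- The local flatness θ_Σ(x,r): the normalized minimal Hausdorff distance between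
Σ ∩ B(x,r) and (x + L) ∩ B(x,r) over hyperplanes L through the origin. -/
noncomputable def flatness {n : ℕ} (A : Set (EuclideanSpace ℝ (Fin n)))
    (x : EuclideanSpace ℝ (Fin n)) (r : ℝ) : ℝ :=
  (1 / r) * ⨅ L : {L : Submodule ℝ (EuclideanSpace ℝ (Fin n)) // Module.finrank ℝ L = n - 1},
    Metric.hausdorffDist (A ∩ Metric.closedBall x r)
      (((fun y => x + y) '' (L.1 : Set (EuclideanSpace ℝ (Fin n)))) ∩ Metric.closedBall x r)

/-- Dp(x) ≠ 0 : some partial derivative of p is nonzero at x. -/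
def gradNeZero {n : ℕ} (p : MvPolynomial (Fin n) ℝ) (x : EuclideanSpace ℝ (Fin n)) : Prop :=
  ∃ i : Fin n, MvPolynomial.eval (fun j => x j) (MvPolynomial.pderiv i p) ≠ 0

/-- Sup of |h| on the unit sphere. -/
noncomputable def sphereSup {n : ℕ} (h : MvPolynomial (Fin n) ℝ) : ℝ :=
  sSup ((fun θ => |evalPt h θ|) '' Metric.sphere (0 : EuclideanSpace ℝ (Fin n)) 1)

/-- The polynomial y ↦ p(t·y). -/
noncomputable def dilatePoly {n : ℕ} (p : MvPolynomial (Fin n) ℝ) (t : ℝ) :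
    MvPolynomial (Fin n) ℝ :=
  MvPolynomial.bind₁ (fun i => MvPolynomial.C t * MvPolynomial.X i) p

/-!
If `y ∈ F` and `h y ≠ 0`, the zeros of `hⁱ` that approach `y` contradict the uniform
convergence `hⁱ → h` on `B`; so `F ⊆ Σ_h`. Conversely, at a zero `z` of `h` in `int B`, `h` takes
both signs in every small ball around `z`, hence so does `hⁱ` for large `i`, and the intermediate
value theorem produces zeros of `hⁱ` close to `z`; thus `z ∈ F`.

The sign change of `h` is the substance. If `h ≥ 0` near a zero `x`, the nonzero homogeneous part
`P` of lowest degree `k ≥ 1` of `h(x + ·)` is harmonic and `P ≥ 0` everywhere (blow up at `x`).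
Integrating against the Gaussian, `∫ ΔP e^{-|y|²} = 2k ∫ P e^{-|y|²}` (a monomial computation with
the recursion for Gaussian moments), so `∫ P e^{-|y|²} = 0`, which forces `P = 0`.
-/

open Real MeasureTheory Topology

noncomputable def gaussMoment (k : ℕ) : ℝ :=
  ∫ x : ℝ, x ^ k * exp (-x ^ 2)

lemma integrable_pow_mul_exp_neg_sq (k : ℕ) :
    Integrable fun x : ℝ => x ^ k * exp (-x ^ 2) := by
  simpa [rpow_natCast] using
    integrable_rpow_mul_exp_neg_mul_sq one_pos (by linarith [k.cast_nonneg (α := ℝ)] : (-1 : ℝ) < k)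

-- The derivative of `x ^ k * exp (-x ^ 2)` has integral zero.
lemma two_mul_gaussMoment_succ (k : ℕ) : 2 * gaussMoment (k + 1) = k * gaussMoment (k - 1) := by
  have hderiv (x : ℝ) : HasDerivAt (fun x => x ^ k * exp (-x ^ 2))
      (k * (x ^ (k - 1) * exp (-x ^ 2)) - 2 * (x ^ (k + 1) * exp (-x ^ 2))) x := by
    refine ((hasDerivAt_pow k x).fun_mul ((hasDerivAt_pow 2 x).fun_neg.exp)).congr_deriv ?_
    push_cast
    ring
  have hint₁ := (integrable_pow_mul_exp_neg_sq (k - 1)).const_mul k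
  have hint₂ := (integrable_pow_mul_exp_neg_sq (k + 1)).const_mul 2
  have h0 := integral_eq_zero_of_hasDerivAt_of_integrable hderiv (hint₁.sub hint₂)
    (integrable_pow_mul_exp_neg_sq k)
  rw [integral_sub hint₁ hint₂, integral_const_mul, integral_const_mul] at h0
  unfold gaussMoment
  linarith

lemma natCast_mul_gaussMoment_sub_two (a : ℕ) :
    (a : ℝ) * ((a - 1 : ℕ) : ℝ) * gaussMoment (a - 2) = 2 * a * gaussMoment a := by
  rcases a with _ | a
  · simp
  · have h := two_mul_gaussMoment_succ a
    simp only [Nat.add_sub_cancel] at *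
    rw [show a + 1 - 2 = a - 1 by omega]
    linear_combination -(↑(a + 1) : ℝ) * h

section GaussFunctional

variable {σ : Type*} [Fintype σ]

/-- The Gaussian integral `p ↦ ∫ p(x) e^{-|x|²} dx`, defined monomial by monomial
(see `integral_eval_mul_exp_neg_sum_sq`). -/
noncomputable def gaussFunctional : MvPolynomial σ ℝ →ₗ[ℝ] ℝ :=
  (basisMonomials σ ℝ).constr ℝ fun α => ∏ i, gaussMoment (α i)

lemma gaussFunctional_monomial (α : σ →₀ ℕ) (c : ℝ) :
    gaussFunctional (monomial α c) = c * ∏ i, gaussMoment (α i) := by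
  have h := (basisMonomials σ ℝ).constr_basis ℝ (fun α => ∏ i, gaussMoment (α i)) α
  rw [coe_basisMonomials] at h
  have hc : monomial α c = c • monomial α 1 := by rw [smul_monomial, smul_eq_mul, mul_one]
  rw [hc, map_smul, gaussFunctional, h, smul_eq_mul]

lemma eval_monomial_mul_exp_neg_sum_sq (α : σ →₀ ℕ) (c : ℝ) (x : σ → ℝ) :
    eval x (monomial α c) * exp (-∑ i, x i ^ 2) = c * ∏ i, (x i ^ α i * exp (-x i ^ 2)) := by
  rw [eval_monomial, Finsupp.prod_fintype _ _ (fun _ => pow_zero _), Finset.prod_mul_distrib,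
    ← exp_sum, Finset.sum_neg_distrib, mul_assoc]

lemma integrable_eval_mul_exp_neg_sum_sq (p : MvPolynomial σ ℝ) :
    Integrable fun x : σ → ℝ => eval x p * exp (-∑ i, x i ^ 2) := by
  induction p using MvPolynomial.induction_on' with
  | monomial α c =>
    simp_rw [eval_monomial_mul_exp_neg_sum_sq]
    exact (Integrable.fintype_prod (f := fun i t => t ^ α i * exp (-t ^ 2))
      fun i => integrable_pow_mul_exp_neg_sq (α i)).const_mul c
  | add p q hp hq =>
    simp only [eval_add, add_mul]
    exact hp.add hq

lemma integral_eval_mul_exp_neg_sum_sq (p : MvPolynomial σ ℝ) :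
    ∫ x : σ → ℝ, eval x p * exp (-∑ i, x i ^ 2) = gaussFunctional p := by
  induction p using MvPolynomial.induction_on' with
  | monomial α c =>
    simp_rw [eval_monomial_mul_exp_neg_sum_sq, integral_const_mul, gaussFunctional_monomial]
    rw [integral_fintype_prod_volume_eq_prod (f := fun i t => t ^ α i * exp (-t ^ 2))]
    rfl
  | add p q hp hq =>
    simp only [eval_add, add_mul]
    rw [integral_add (integrable_eval_mul_exp_neg_sum_sq p) (integrable_eval_mul_exp_neg_sum_sq q),
      hp, hq, map_add]

lemma gaussFunctional_pderiv_pderiv_monomial (α : σ →₀ ℕ) (c : ℝ) (i : σ) :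
    gaussFunctional (pderiv i (pderiv i (monomial α c))) =
      2 * α i * gaussFunctional (monomial α c) := by
  classical
  have hne (j : σ) (hj : j ≠ i) :
      (α - Finsupp.single i 1 - Finsupp.single i 1 : σ →₀ ℕ) j = α j := by
    simp [Ne.symm hj]
  have hi : (α - Finsupp.single i 1 - Finsupp.single i 1 : σ →₀ ℕ) i = α i - 2 := by
    simp only [Finsupp.coe_tsub, Pi.sub_apply, Finsupp.single_eq_same]
    omega
  simp only [pderiv_monomial, gaussFunctional_monomial]
  rw [Fintype.prod_eq_mul_prod_compl i, Fintype.prod_eq_mul_prod_compl i, hi,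
    Finset.prod_congr rfl fun j hj => by rw [hne j (by simpa using hj)],
    Finsupp.tsub_apply, Finsupp.single_eq_same]
  linear_combination (c * ∏ j ∈ {i}ᶜ, gaussMoment (α j)) * natCast_mul_gaussMoment_sub_two (α i)

lemma gaussFunctional_laplacian {P : MvPolynomial σ ℝ} {k : ℕ} (hP : P.IsHomogeneous k) :
    gaussFunctional (∑ i, pderiv i (pderiv i P)) = 2 * k * gaussFunctional P := by
  rw [P.as_sum]
  simp only [map_sum, gaussFunctional_pderiv_pderiv_monomial, Finset.mul_sum]
  rw [Finset.sum_comm]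
  refine Finset.sum_congr rfl fun α hα => ?_
  rw [← Finset.sum_mul, ← Finset.mul_sum, ← Nat.cast_sum, ← Finsupp.degree_eq_sum,
    Finsupp.degree_apply, ← hP.degree_eq_sum_deg_support hα]

end GaussFunctional

lemma MvPolynomial.homogeneousComponent_pderiv {σ R : Type*} [CommSemiring R]
    (p : MvPolynomial σ R) (i : σ) (j : ℕ) :
    homogeneousComponent j (pderiv i p) = pderiv i (homogeneousComponent (j + 1) p) := by
  ext m
  simp only [coeff_homogeneousComponent, coeff_pderiv, map_add, Finsupp.degree_single,
    Nat.add_right_cancel_iff, ite_mul, zero_mul]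

lemma MvPolynomial.IsHomogeneous.eval_smul {σ R : Type*} [Fintype σ] [CommSemiring R]
    {φ : MvPolynomial σ R} {k : ℕ} (hφ : φ.IsHomogeneous k) (t : R) (x : σ → R) :
    eval (t • x) φ = t ^ k * eval x φ := by
  rw [eval_eq', eval_eq', Finset.mul_sum]
  refine Finset.sum_congr rfl fun α hα => ?_
  simp only [Pi.smul_apply, smul_eq_mul, mul_pow, Finset.prod_mul_distrib,
    Finset.prod_pow_eq_pow_sum, ← Finsupp.degree_eq_sum, Finsupp.degree_apply,
    ← hφ.degree_eq_sum_deg_support hα]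
  ring

lemma ContinuousAt.nonneg_of_eventually_pow_mul_nonneg {g : ℝ → ℝ} (hg : ContinuousAt g 0)
    (k : ℕ) (h : ∀ᶠ t in 𝓝[>] 0, 0 ≤ t ^ k * g t) : 0 ≤ g 0 :=
  ge_of_tendsto (hg.tendsto.mono_left nhdsWithin_le_nhds) <| by
    filter_upwards [h, self_mem_nhdsWithin] with t ht htpos
    exact nonneg_of_mul_nonneg_right ht (pow_pos htpos k)

lemma eval_homogeneousComponent_nonneg_of_eventually_nonneg {σ : Type*} [Fintype σ]
    {q : MvPolynomial σ ℝ} {k : ℕ} (hlow : ∀ j < k, homogeneousComponent j q = 0)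
    (hq : ∀ᶠ x in 𝓝 0, 0 ≤ eval x q) (y : σ → ℝ) :
    0 ≤ eval y (homogeneousComponent k q) := by
  set g : ℝ → ℝ := fun t =>
    ∑ j ∈ Finset.range (q.totalDegree + 1), t ^ (j - k) * eval y (homogeneousComponent j q)
  have hscale (t : ℝ) : eval (t • y) q = t ^ k * g t := by
    conv_lhs => rw [← sum_homogeneousComponent q]
    rw [map_sum, Finset.mul_sum]
    refine Finset.sum_congr rfl fun j _ => ?_
    rcases lt_or_ge j k with hjk | hjk
    · simp [hlow j hjk]
    · rw [(homogeneousComponent_isHomogeneous j q).eval_smul, ← mul_assoc, ← pow_add,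
        Nat.add_sub_cancel' hjk]
  have hg0 : g 0 = eval y (homogeneousComponent k q) := by
    simp only [g]
    rw [Finset.sum_eq_single k]
    · simp
    · intro j _ hjk
      rcases lt_or_gt_of_ne hjk with hjk | hjk
      · simp [hlow j hjk]
      · simp [zero_pow (Nat.sub_ne_zero_of_lt hjk)]
    · intro hk
      simp [homogeneousComponent_eq_zero k q (by simpa using hk)]
  have hsmul : Tendsto (fun t : ℝ => t • y) (𝓝[>] 0) (𝓝 0) := by
    have : Continuous fun t : ℝ => t • y := by fun_prop
    simpa using (this.tendsto 0).mono_left nhdsWithin_le_nhds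
  rw [← hg0]
  refine ContinuousAt.nonneg_of_eventually_pow_mul_nonneg (by fun_prop) k ?_
  filter_upwards [hsmul.eventually hq] with t ht
  rwa [← hscale]

lemma continuous_evalPt {n : ℕ} (p : MvPolynomial (Fin n) ℝ) : Continuous (evalPt p) :=
  (continuous_eval p).comp (PiLp.continuous_ofLp 2 _)

lemma evalPt_translatePoly {n : ℕ} (p : MvPolynomial (Fin n) ℝ) (x y : EuclideanSpace ℝ (Fin n)) :
    evalPt (translatePoly p x) y = evalPt p (y + x) := by
  rw [evalPt, translatePoly, eval, eval₂Hom_bind₁]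
  simp [evalPt]

lemma pderiv_translatePoly {n : ℕ} (p : MvPolynomial (Fin n) ℝ) (x : EuclideanSpace ℝ (Fin n))
    (i : Fin n) : pderiv i (translatePoly p x) = translatePoly (pderiv i p) x := by
  induction p using MvPolynomial.induction_on with
  | C a => simp [translatePoly]
  | add p q hp hq => simp only [translatePoly, map_add] at *; rw [hp, hq]
  | mul_X p j hp =>
    classical
    simp only [translatePoly] at *
    simp only [pderiv_mul, map_mul, map_add, hp, bind₁_X_right, pderiv_X, Pi.single_apply,
      pderiv_C]
    split_ifs <;> simp

namespace IsHarmonic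

variable {n : ℕ}

lemma homogeneousComponent {p : MvPolynomial (Fin n) ℝ} (hp : IsHarmonic p) (k : ℕ) :
    IsHarmonic (homogeneousComponent k p) := by
  unfold IsHarmonic at hp ⊢
  match k with
  | 0 => simp [homogeneousComponent_zero]
  | 1 => simp [← homogeneousComponent_pderiv, homogeneousComponent_zero]
  | j + 1 + 1 => simp only [← homogeneousComponent_pderiv, ← map_sum, hp, map_zero]

lemma neg {p : MvPolynomial (Fin n) ℝ} (hp : IsHarmonic p) : IsHarmonic (-p) := by
  unfold IsHarmonic at hp ⊢
  simp [hp]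

theorem eq_zero_of_isHomogeneous_of_nonneg {k : ℕ} {P : MvPolynomial (Fin n) ℝ}
    (hP : IsHarmonic P) (hhom : P.IsHomogeneous k) (hk : k ≠ 0) (hnonneg : ∀ x, 0 ≤ eval x P) :
    P = 0 := by
  have hG : gaussFunctional P = 0 := by
    have h := gaussFunctional_laplacian hhom
    rw [show ∑ i, pderiv i (pderiv i P) = 0 from hP, map_zero] at h
    exact (mul_eq_zero.mp h.symm).resolve_left (by positivity)
  set g := fun x : Fin n → ℝ => eval x P * exp (-∑ i, x i ^ 2)
  have hg : g = 0 := by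
    have hcont : Continuous g := (continuous_eval P).mul (by fun_prop)
    refine (hcont.ae_eq_iff_eq volume continuous_const).mp ?_
    refine (integral_eq_zero_iff_of_nonneg (fun x => mul_nonneg (hnonneg x) (exp_nonneg _))
      (integrable_eval_mul_exp_neg_sum_sq P)).mp ?_
    rw [integral_eval_mul_exp_neg_sum_sq, hG]
  refine MvPolynomial.funext fun x => ?_
  simpa [g, exp_ne_zero] using congrFun hg x

theorem not_eventually_nonneg {q : MvPolynomial (Fin n) ℝ} (hq : IsHarmonic q) (hq0 : q ≠ 0)
    (hzero : eval 0 q = 0) : ¬ ∀ᶠ x in 𝓝 0, 0 ≤ eval x q := by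
  classical
  intro hnonneg
  have hex : ∃ k, MvPolynomial.homogeneousComponent k q ≠ 0 := by
    by_contra! hall
    exact hq0 (by rw [← sum_homogeneousComponent q]; simp [hall])
  have hk0 : Nat.find hex ≠ 0 := by
    intro hk
    have h := Nat.find_spec hex
    rw [hk, homogeneousComponent_zero, ← constantCoeff_eq, ← eval_zero, hzero, map_zero] at h
    exact h rfl
  refine Nat.find_spec hex (hq.homogeneousComponent _ |>.eq_zero_of_isHomogeneous_of_nonneg
    (homogeneousComponent_isHomogeneous _ q) hk0 fun y => ?_)
  exact eval_homogeneousComponent_nonneg_of_eventually_nonneg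
    (fun j hj => not_not.mp (Nat.find_min hex hj)) hnonneg y

lemma translatePoly {p : MvPolynomial (Fin n) ℝ} (hp : IsHarmonic p)
    (x : EuclideanSpace ℝ (Fin n)) : IsHarmonic (translatePoly p x) := by
  unfold IsHarmonic at hp ⊢
  simp only [pderiv_translatePoly]
  simp only [_root_.translatePoly, ← map_sum, hp, map_zero]

theorem exists_evalPt_neg {h : MvPolynomial (Fin n) ℝ} (hh : IsHarmonic h) (h0 : h ≠ 0)
    {x : EuclideanSpace ℝ (Fin n)} (hx : evalPt h x = 0) {ε : ℝ} (hε : 0 < ε) :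
    ∃ y ∈ ball x ε, evalPt h y < 0 := by
  by_contra! hnonneg
  have heval (z : Fin n → ℝ) :
      eval z (_root_.translatePoly h x) = evalPt h (WithLp.toLp 2 z + x) :=
    evalPt_translatePoly h x (WithLp.toLp 2 z)
  refine (hh.translatePoly x).not_eventually_nonneg (fun hq => h0 ?_) ?_ ?_
  · refine MvPolynomial.funext fun z => ?_
    simpa [hq, evalPt] using (heval (z - WithLp.ofLp x)).symm
  · rw [heval]
    simpa using hx
  · have hcont : Continuous fun z : Fin n → ℝ => WithLp.toLp 2 z + x := by fun_prop
    have hlim : Tendsto (fun z : Fin n → ℝ => WithLp.toLp 2 z + x) (𝓝 0) (𝓝 x) := by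
      simpa using hcont.tendsto 0
    filter_upwards [hlim.eventually (ball_mem_nhds x hε)] with z hz
    exact heval z ▸ hnonneg _ hz

theorem exists_evalPt_pos {h : MvPolynomial (Fin n) ℝ} (hh : IsHarmonic h) (h0 : h ≠ 0)
    {x : EuclideanSpace ℝ (Fin n)} (hx : evalPt h x = 0) {ε : ℝ} (hε : 0 < ε) :
    ∃ y ∈ ball x ε, 0 < evalPt h y := by
  have hneg (y) : evalPt (-h) y = -evalPt h y := by simp [evalPt]
  obtain ⟨y, hy, hlt⟩ :=
    hh.neg.exists_evalPt_neg (neg_ne_zero.mpr h0) (by rw [hneg, hx, neg_zero]) hε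
  exact ⟨y, hy, by linarith [hneg y]⟩

end IsHarmonic

section HausdorffLimit

variable {ι X : Type*} {l : Filter ι} [l.NeBot] {fs : ι → X → ℝ} {f : X → ℝ} {K F : Set X}

theorem eq_zero_of_mem_of_tendsto_hausdorffEDist [MetricSpace X] {y : X}
    (hf : ContinuousAt f y) (hconv : TendstoUniformlyOn fs f l K)
    (hlim : Tendsto (fun i => hausdorffEDist ({x | fs i x = 0} ∩ K) F) l (𝓝 0))
    (hy : y ∈ F) : f y = 0 := by
  refine eq_of_forall_dist_le fun ε hε => ?_
  obtain ⟨δ, hδ, hfδ⟩ := Metric.continuousAt_iff.mp hf (ε / 2) (half_pos hε)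
  obtain ⟨i, hunif, hclose⟩ := ((Metric.tendstoUniformlyOn_iff.mp hconv (ε / 2) (half_pos hε)).and
    (hlim.eventually_lt_const (ENNReal.ofReal_pos.mpr hδ))).exists
  rw [hausdorffEDist_comm] at hclose
  obtain ⟨z, ⟨hz0, hzK⟩, hyz⟩ := exists_edist_lt_of_hausdorffEDist_lt hy hclose
  have hfz := hfδ (dist_comm y z ▸ edist_lt_ofReal.mp hyz)
  have hfsz := hunif z hzK
  rw [show fs i z = 0 from hz0] at hfsz
  calc dist (f y) 0 ≤ dist (f y) (f z) + dist (f z) 0 := dist_triangle _ _ _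
    _ ≤ ε := by rw [dist_comm (f y)]; linarith

theorem mem_of_tendsto_hausdorffEDist_of_sign_change [NormedAddCommGroup X] [NormedSpace ℝ X]
    (hcont : ∀ i, Continuous (fs i)) (hconv : ∀ x ∈ K, Tendsto (fun i => fs i x) l (𝓝 (f x)))
    (hF : IsClosed F) (hlim : Tendsto (fun i => hausdorffEDist ({x | fs i x = 0} ∩ K) F) l (𝓝 0))
    {z : X} (hz : z ∈ interior K) (hpos : ∀ ε > 0, ∃ a ∈ ball z ε, 0 < f a)
    (hneg : ∀ ε > 0, ∃ b ∈ ball z ε, f b < 0) : z ∈ F := by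
  rw [← hF.closure_eq, Metric.mem_closure_iff]
  intro ε hε
  obtain ⟨ρ, hρ, hρK⟩ := Metric.isOpen_iff.mp isOpen_interior z hz
  set r := min ρ (ε / 2)
  have hr : 0 < r := lt_min hρ (half_pos hε)
  have hrK : ball z r ⊆ K := (ball_subset_ball (min_le_left _ _)).trans (hρK.trans interior_subset)
  obtain ⟨a, ha, hfa⟩ := hpos r hr
  obtain ⟨b, hb, hfb⟩ := hneg r hr
  obtain ⟨i, ⟨hfsa, hfsb⟩, hclose⟩ := (((hconv a (hrK ha)).eventually (lt_mem_nhds hfa)).and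
    ((hconv b (hrK hb)).eventually (gt_mem_nhds hfb)) |>.and
    (hlim.eventually_lt_const (ENNReal.ofReal_pos.mpr (half_pos hε)))).exists
  obtain ⟨w, hw, hw0⟩ := (convex_ball z r).isPreconnected.intermediate_value hb ha
    (hcont i).continuousOn ⟨hfsb.le, hfsa.le⟩
  have hwZ : w ∈ {x | fs i x = 0} ∩ K := ⟨hw0, hrK hw⟩
  obtain ⟨y, hyF, hwy⟩ := exists_edist_lt_of_hausdorffEDist_lt hwZ hclose
  refine ⟨y, hyF, ?_⟩
  calc dist z y ≤ dist z w + dist w y := dist_triangle _ _ _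
    _ < r + ε / 2 := add_lt_add (mem_ball'.mp hw) (edist_lt_ofReal.mp hwy)
    _ ≤ ε := by linarith [min_le_right ρ (ε / 2)]

end HausdorffLimit

theorem zeroSet_limit_subset_general {n : ℕ} (hs : ℕ → MvPolynomial (Fin n) ℝ)
    (h : MvPolynomial (Fin n) ℝ) (hh : IsHarmonic h)
    (hnc : h.totalDegree ≠ 0)
    (hconv : ∀ K : Set (EuclideanSpace ℝ (Fin n)), IsCompact K →
      TendstoUniformlyOn (fun i y => evalPt (hs i) y) (fun y => evalPt h y)
        Filter.atTop K)
    (c : EuclideanSpace ℝ (Fin n)) (R : ℝ)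
    (F : Set (EuclideanSpace ℝ (Fin n))) (hF : IsClosed F)
    (hFB : F ⊆ Metric.closedBall c R)
    (hlim : Filter.Tendsto
      (fun i => EMetric.hausdorffEdist (zeroSet (hs i) ∩ Metric.closedBall c R) F)
      Filter.atTop (nhds 0)) :
    F ⊆ zeroSet h ∩ Metric.closedBall c R ∧
      F ∩ interior (Metric.closedBall c R)
        = zeroSet h ∩ interior (Metric.closedBall c R) := by
  have hunif := hconv _ (isCompact_closedBall c R)
  have hF_zero : F ⊆ zeroSet h ∩ closedBall c R := fun y hy =>
    ⟨eq_zero_of_mem_of_tendsto_hausdorffEDist (continuous_evalPt h).continuousAt hunif hlim hy,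
      hFB hy⟩
  have h0 : h ≠ 0 := by
    rintro rfl
    exact hnc totalDegree_zero
  refine ⟨hF_zero, (Set.inter_subset_inter_left _ fun y hy => (hF_zero hy).1).antisymm ?_⟩
  rintro z ⟨hz0, hz⟩
  refine ⟨mem_of_tendsto_hausdorffEDist_of_sign_change (fun i => continuous_evalPt (hs i))
    (fun x hx => hunif.tendsto_at hx) hF hlim hz ?_ ?_, hz⟩
  · exact fun ε hε => hh.exists_evalPt_pos h0 hz0 hε
  · exact fun ε hε => hh.exists_evalPt_neg h0 hz0 hε

/-- If Σ_{hⁱ} ∩ B converges in the Hausdorff distance to a closed set F ⊆ B, then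
F ⊆ Σ_h ∩ B and F ∩ int B = Σ_h ∩ int B. -/
theorem zeroSet_limit_subset {n : ℕ} (hs : ℕ → MvPolynomial (Fin n) ℝ)
    (h : MvPolynomial (Fin n) ℝ) (hharm : ∀ i, IsHarmonic (hs i)) (hh : IsHarmonic h)
    (hnc : h.totalDegree ≠ 0)
    (hconv : ∀ K : Set (EuclideanSpace ℝ (Fin n)), IsCompact K →
      TendstoUniformlyOn (fun i y => evalPt (hs i) y) (fun y => evalPt h y)
        Filter.atTop K)
    (c : EuclideanSpace ℝ (Fin n)) (R : ℝ)
    (hB : (zeroSet h ∩ interior (Metric.closedBall c R)).Nonempty)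
    (F : Set (EuclideanSpace ℝ (Fin n))) (hF : IsClosed F)
    (hFB : F ⊆ Metric.closedBall c R)
    (hlim : Filter.Tendsto
      (fun i => EMetric.hausdorffEdist (zeroSet (hs i) ∩ Metric.closedBall c R) F)
      Filter.atTop (nhds 0)) :
    F ⊆ zeroSet h ∩ Metric.closedBall c R ∧
      F ∩ interior (Metric.closedBall c R)
        = zeroSet h ∩ interior (Metric.closedBall c R) :=
  zeroSet_limit_subset_general hs h hh hnc hconv c R F hF hFB hlim
end

section
/- Tacnode example: for p(x,y) = x⁴ + y⁴ − y² on ℝ², the origin belongs to Σ_p with Dp(0) = 0, yet the origin is a flat point of Σ_p, i.e. θ_{Σ_p}(0,r) → 0 as r → 0. Hence for general (non-harmonic) polynomials, flat points of the zero set need not be regular points. -/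
open MvPolynomial Metric Filter
open scoped ENNReal

/-! The tacnode is the union of the two branches `y² = (1 ∓ √(1 - 4x⁴))/2`. Near the origin only
the lower branch `y² ≈ x⁴` is present, so inside `B(0,r)` the zero set stays within `O(r²)` of the
`x`-axis and, conversely, every point of the axis is `O(r²)`-close to the lower branch. The
Hausdorff distance to the axis is therefore `O(r²)`, and the flatness is `O(r)`. -/

open Topology

section Flatness

variable {n : ℕ} {A : Set (EuclideanSpace ℝ (Fin n))} {x : EuclideanSpace ℝ (Fin n)}

lemma flatness_nonneg {r : ℝ} (hr : 0 ≤ r) : 0 ≤ flatness A x r :=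
  mul_nonneg (one_div_nonneg.mpr hr) (Real.iInf_nonneg fun _ => hausdorffDist_nonneg)

lemma flatness_le_of_finrank_eq {r : ℝ} (hr : 0 ≤ r) (L : Submodule ℝ (EuclideanSpace ℝ (Fin n)))
    (hL : Module.finrank ℝ L = n - 1) :
    flatness A x r ≤ (1 / r) * hausdorffDist (A ∩ closedBall x r)
      (((fun y => x + y) '' (L : Set (EuclideanSpace ℝ (Fin n)))) ∩ closedBall x r) := by
  rw [flatness]
  refine mul_le_mul_of_nonneg_left ?_ (one_div_nonneg.mpr hr)
  refine ciInf_le ?_ (⟨L, hL⟩ : {L : Submodule ℝ _ // Module.finrank ℝ L = n - 1})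
  exact ⟨0, by rintro _ ⟨L', rfl⟩; exact hausdorffDist_nonneg⟩

theorem tendsto_flatness_of_hausdorffDist_le_mul_sq (L : Submodule ℝ (EuclideanSpace ℝ (Fin n)))
    (hL : Module.finrank ℝ L = n - 1) {C : ℝ}
    (h : ∀ᶠ r in 𝓝[>] 0, hausdorffDist (A ∩ closedBall x r)
      (((fun y => x + y) '' (L : Set (EuclideanSpace ℝ (Fin n)))) ∩ closedBall x r) ≤ C * r ^ 2) :
    Tendsto (flatness A x) (𝓝[>] 0) (𝓝 0) := by
  have hCr : Tendsto (fun r : ℝ => C * r) (𝓝[>] 0) (𝓝 0) := by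
    simpa using ((continuous_const_mul C).tendsto 0).mono_left nhdsWithin_le_nhds
  refine squeeze_zero' ?_ ?_ hCr
  · filter_upwards [self_mem_nhdsWithin] with r hr using flatness_nonneg (le_of_lt hr)
  · filter_upwards [self_mem_nhdsWithin, h] with r (hr : 0 < r) hrC
    calc flatness A x r ≤ (1 / r) * (C * r ^ 2) :=
          (flatness_le_of_finrank_eq hr.le L hL).trans
            (mul_le_mul_of_nonneg_left hrC (one_div_nonneg.mpr hr.le))
      _ = C * r := by field_simp

end Flatness

section TacnodeBranches

lemma tacnode_sq_le_of_sq_le {x y : ℝ} (h : x ^ 4 + y ^ 4 - y ^ 2 = 0) (hy : y ^ 2 ≤ 1 / 4) :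
    3 * y ^ 2 ≤ 4 * x ^ 4 := by
  nlinarith [sq_nonneg y]

lemma exists_tacnode_lower_branch {x : ℝ} (hx : 4 * x ^ 4 ≤ 1) :
    ∃ y : ℝ, x ^ 4 + y ^ 4 - y ^ 2 = 0 ∧ y ^ 2 ≤ 2 * x ^ 4 := by
  set s := √(1 - 4 * x ^ 4)
  have hs_sq : s ^ 2 = 1 - 4 * x ^ 4 := Real.sq_sqrt (by linarith)
  have hs_le : s ≤ 1 := Real.sqrt_le_one.mpr (by nlinarith [sq_nonneg (x ^ 2)])
  refine ⟨√((1 - s) / 2), ?_⟩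
  rw [show √((1 - s) / 2) ^ 4 = (√((1 - s) / 2) ^ 2) ^ 2 by ring,
    Real.sq_sqrt (by linarith)]
  constructor
  · linear_combination (1 / 4 : ℝ) * hs_sq
  · nlinarith [Real.sqrt_nonneg (1 - 4 * x ^ 4)]

/-- Shrinking `a` by the factor `1 - 2r²` keeps the point of the lower branch above it inside the
disc of radius `r`, because `y² ≤ 2x⁴` there and `(1 - 2r²)²(1 + 2r²) ≤ 1`. -/
lemma exists_tacnode_near {r a : ℝ} (hr : r ^ 2 ≤ 1 / 4) (ha : a ^ 2 ≤ r ^ 2) :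
    ∃ x y : ℝ, x ^ 4 + y ^ 4 - y ^ 2 = 0 ∧ x ^ 2 + y ^ 2 ≤ r ^ 2 ∧
      (a - x) ^ 2 + y ^ 2 ≤ 4 * r ^ 4 := by
  set x := (1 - 2 * r ^ 2) * a
  have hc : (1 - 2 * r ^ 2) ^ 2 ≤ 1 := by nlinarith [sq_nonneg r]
  have hx : x ^ 2 ≤ r ^ 2 := by
    rw [mul_pow]
    nlinarith [mul_le_mul_of_nonneg_right hc (sq_nonneg a)]
  have hx4 : x ^ 4 ≤ x ^ 2 * r ^ 2 := by nlinarith [sq_nonneg x]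
  obtain ⟨y, hy, hyx⟩ := exists_tacnode_lower_branch (x := x) (by nlinarith [sq_nonneg x])
  refine ⟨x, y, hy, ?_, ?_⟩
  · nlinarith [mul_le_mul_of_nonneg_left ha (sq_nonneg (1 - 2 * r ^ 2)), sq_nonneg r, sq_nonneg a]
  · nlinarith [sq_nonneg r, sq_nonneg a]

end TacnodeBranches

section Plane

lemma EuclideanSpace.mem_closedBall_zero_iff_fin_two {z : EuclideanSpace ℝ (Fin 2)} {r : ℝ}
    (hr : 0 ≤ r) : z ∈ closedBall 0 r ↔ z 0 ^ 2 + z 1 ^ 2 ≤ r ^ 2 := by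
  rw [EuclideanSpace.closedBall_zero_eq r hr, Set.mem_ofPred_eq, Fin.sum_univ_two]

lemma EuclideanSpace.dist_le_of_fin_two {z w : EuclideanSpace ℝ (Fin 2)} {d : ℝ} (hd : 0 ≤ d)
    (h : (z 0 - w 0) ^ 2 + (z 1 - w 1) ^ 2 ≤ d ^ 2) : dist z w ≤ d := by
  rw [← sq_le_sq₀ dist_nonneg hd, EuclideanSpace.dist_sq_eq, Fin.sum_univ_two]
  simpa only [Real.dist_eq, sq_abs] using h

def xAxis : Submodule ℝ (EuclideanSpace ℝ (Fin 2)) := ℝ ∙ EuclideanSpace.single 0 1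

lemma finrank_xAxis : Module.finrank ℝ xAxis = 2 - 1 :=
  finrank_span_singleton (by simp)

lemma apply_one_eq_zero_of_mem_xAxis {w : EuclideanSpace ℝ (Fin 2)} (hw : w ∈ xAxis) :
    w 1 = 0 := by
  obtain ⟨a, rfl⟩ := Submodule.mem_span_singleton.mp hw
  simp

end Plane

section Tacnode

local notation "tacnode" => (X 0 ^ 4 + X 1 ^ 4 - X 1 ^ 2 : MvPolynomial (Fin 2) ℝ)

lemma mem_zeroSet_tacnode {z : EuclideanSpace ℝ (Fin 2)} :
    z ∈ zeroSet tacnode ↔ z 0 ^ 4 + z 1 ^ 4 - z 1 ^ 2 = 0 := by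
  simp [zeroSet, evalPt]

variable {r : ℝ}

lemma exists_mem_xAxis_dist_le_of_mem_tacnode (hr0 : 0 ≤ r) (hr : r ≤ 1 / 2)
    {z : EuclideanSpace ℝ (Fin 2)}
    (hz : z ∈ zeroSet tacnode ∩ closedBall 0 r) :
    ∃ w ∈ (xAxis : Set _) ∩ closedBall 0 r, dist z w ≤ 2 * r ^ 2 := by
  obtain ⟨hz, hzr⟩ := hz
  rw [mem_zeroSet_tacnode] at hz
  rw [EuclideanSpace.mem_closedBall_zero_iff_fin_two hr0] at hzr
  have hy := tacnode_sq_le_of_sq_le hz (by nlinarith [sq_nonneg (z 0)])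
  set w : EuclideanSpace ℝ (Fin 2) := z 0 • EuclideanSpace.single 0 1
  have hwL : w ∈ xAxis := Submodule.smul_mem _ _ (Submodule.mem_span_singleton_self _)
  have hw0 : w 0 = z 0 := by simp [w]
  have hw1 : w 1 = 0 := apply_one_eq_zero_of_mem_xAxis hwL
  refine ⟨w, ⟨hwL, ?_⟩, ?_⟩
  · rw [EuclideanSpace.mem_closedBall_zero_iff_fin_two hr0, hw0, hw1]
    nlinarith [sq_nonneg (z 1)]
  · apply EuclideanSpace.dist_le_of_fin_two (by positivity)
    rw [hw0, hw1]
    nlinarith [sq_nonneg (z 0), sq_nonneg (z 1), sq_nonneg r]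

lemma exists_mem_tacnode_dist_le_of_mem_xAxis (hr0 : 0 ≤ r) (hr : r ≤ 1 / 2)
    {w : EuclideanSpace ℝ (Fin 2)}
    (hw : w ∈ (xAxis : Set _) ∩ closedBall 0 r) :
    ∃ z ∈ zeroSet tacnode ∩ closedBall 0 r, dist w z ≤ 2 * r ^ 2 := by
  obtain ⟨hwL, hwr⟩ := hw
  have hw1 := apply_one_eq_zero_of_mem_xAxis hwL
  rw [EuclideanSpace.mem_closedBall_zero_iff_fin_two hr0, hw1] at hwr
  obtain ⟨x, y, hxy, hxyr, hdist⟩ :=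
    exists_tacnode_near (r := r) (a := w 0) (by nlinarith) (by linarith)
  refine ⟨!₂[x, y], ⟨mem_zeroSet_tacnode.mpr hxy, ?_⟩, ?_⟩
  · rwa [EuclideanSpace.mem_closedBall_zero_iff_fin_two hr0]
  · apply EuclideanSpace.dist_le_of_fin_two (by positivity)
    simp only [hw1, Matrix.cons_val_zero, Matrix.cons_val_one]
    nlinarith

theorem hausdorffDist_tacnode_xAxis_le (hr0 : 0 ≤ r) (hr : r ≤ 1 / 2) :
    hausdorffDist (zeroSet tacnode ∩ closedBall 0 r) ((xAxis : Set _) ∩ closedBall 0 r) ≤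
      2 * r ^ 2 :=
  hausdorffDist_le_of_mem_dist (by positivity)
    (fun _ hz => exists_mem_xAxis_dist_le_of_mem_tacnode hr0 hr hz)
    (fun _ hw => exists_mem_tacnode_dist_le_of_mem_xAxis hr0 hr hw)

end Tacnode

/-- Tacnode example: the origin is a singular point of p(x,y) = x⁴ + y⁴ − y², yet it is a
flat point of the zero set. -/
theorem tacnode_flat_singular :
    let p : MvPolynomial (Fin 2) ℝ :=
      MvPolynomial.X 0 ^ 4 + MvPolynomial.X 1 ^ 4 - MvPolynomial.X 1 ^ 2
    evalPt p 0 = 0 ∧ (¬ gradNeZero p 0) ∧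
      Filter.Tendsto (fun r => flatness (zeroSet p) 0 r)
        (nhdsWithin 0 (Set.Ioi 0)) (nhds 0) := by
  intro p
  refine ⟨by simp [p, evalPt], ?_, ?_⟩
  · rintro ⟨i, hi⟩
    fin_cases i <;> simp [p, pderiv_X] at hi
  · refine tendsto_flatness_of_hausdorffDist_le_mul_sq xAxis finrank_xAxis (C := 2) ?_
    filter_upwards [Ioo_mem_nhdsGT (by norm_num : (0 : ℝ) < 1 / 2)] with r ⟨hr0, hr⟩
    simpa only [zero_add, Set.image_id'] using hausdorffDist_tacnode_xAxis_le hr0.le hr.le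
end
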